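/- Let L > 1, α > 0, C₁, C₂ > 0, z ∈ ℂ, and δω ∈ ℝ. Let G, g : Λ × Λ → ℂ be measurable with |G(x,y)| ≤ C₁ e^{−α|x−y|} and |g(y,x')| ≤ C₂ e^{−α|y−x'|} for all pairs in Λ × Λ. Define r(x,x') := −z ∫_Λ (e^{i δω fl(x,y,x')} − 1) · G(x,y) · g(y,x') dy. Then there exists a constant C₃ > 0 depending only on α, C₁, C₂ and |z| (in particular independent of L and of δω) such that |r(x,x')| ≤ C₃ |δω| e^{−(α/4)|x−x'|} for all x, x' ∈ Λ. -/

import Mathlib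

/-!
The flux `fl x y x'` is half the third component of the cross product of `x - y` and `y - x'`, so
`|e^{iδω fl} - 1| ≤ |δω| |x - y| |y - x'|`. Each polynomial factor is absorbed by half of the
exponential decay of `G` resp. `g` (`t e^{-αt} ≤ (2/α) e^{-αt/2}`), and the triangle inequality
splits the remaining `e^{-(α/2)(|x-y|+|y-x'|)}` into `e^{-(α/4)|x-x'|} e^{-(α/4)|x-y|}`.
Integrating the last factor over all of `ℝ³` gives a constant independent of `L` and `δω`.
-/

open MeasureTheory Real

noncomputable section

/-- The open cube `Λ = (−L/2, L/2)³ ⊂ ℝ³`. -/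
def cube (L : ℝ) : Set (EuclideanSpace ℝ (Fin 3)) :=
  {x | ∀ i, x i ∈ Set.Ioo (-(L / 2)) (L / 2)}

/-- The magnetic phase `φ(x,x') = (x₂x₁' − x₁x₂')/2`. -/
def phi (x x' : EuclideanSpace ℝ (Fin 3)) : ℝ := (x 1 * x' 0 - x 0 * x' 1) / 2

/-- The magnetic flux through the triangle with vertices `x`, `y`, `x'`. -/
def fl (x y x' : EuclideanSpace ℝ (Fin 3)) : ℝ := phi x y + phi y x' + phi x' x

lemma isOpen_cube (L : ℝ) : IsOpen (cube L) := by
  simp only [cube, Set.ofPred_forall]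
  exact isOpen_iInter_of_finite fun i => isOpen_Ioo.preimage (PiLp.continuous_apply 2 _ i)

lemma fl_eq (x y x' : EuclideanSpace ℝ (Fin 3)) :
    fl x y x' = ((x - y) 1 * (y - x') 0 - (x - y) 0 * (y - x') 1) / 2 := by
  simp only [fl, phi, PiLp.sub_apply]
  ring

lemma abs_fl_le (x y x' : EuclideanSpace ℝ (Fin 3)) :
    |fl x y x'| ≤ ‖x - y‖ * ‖y - x'‖ := by
  have hprod : ∀ i j : Fin 3, |(x - y) i * (y - x') j| ≤ ‖x - y‖ * ‖y - x'‖ := fun i j => by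
    rw [abs_mul, ← Real.norm_eq_abs, ← Real.norm_eq_abs]
    exact mul_le_mul (PiLp.norm_apply_le (x - y) i) (PiLp.norm_apply_le (y - x') j) (abs_nonneg _)
      (norm_nonneg _)
  rw [fl_eq, abs_div, abs_two]
  linarith [abs_sub ((x - y) 1 * (y - x') 0) ((x - y) 0 * (y - x') 1), hprod 1 0, hprod 0 1]

lemma norm_cexp_fl_sub_one_le (δω : ℝ) (x y x' : EuclideanSpace ℝ (Fin 3)) :
    ‖Complex.exp (Complex.I * δω * (fl x y x' : ℝ)) - 1‖ ≤ |δω| * (‖x - y‖ * ‖y - x'‖) := by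
  calc ‖Complex.exp (Complex.I * δω * (fl x y x' : ℝ)) - 1‖
      = ‖Complex.exp (Complex.I * (δω * fl x y x' : ℝ)) - 1‖ := by push_cast; ring_nf
    _ ≤ |δω * fl x y x'| := Real.norm_exp_I_mul_ofReal_sub_one_le
    _ ≤ |δω| * (‖x - y‖ * ‖y - x'‖) := by
      rw [abs_mul]; exact mul_le_mul_of_nonneg_left (abs_fl_le x y x') (abs_nonneg δω)

lemma mul_exp_neg_le {α : ℝ} (hα : 0 < α) (t : ℝ) :
    t * exp (-α * t) ≤ 2 / α * exp (-(α / 2) * t) := by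
  have hhalf : t * exp (-(α / 2) * t) ≤ 2 / α := by
    rw [neg_mul, exp_neg, ← div_eq_mul_inv, div_le_div_iff₀ (exp_pos _) hα]
    nlinarith [add_one_le_exp (α / 2 * t)]
  calc t * exp (-α * t) = t * exp (-(α / 2) * t) * exp (-(α / 2) * t) := by
        rw [mul_assoc, ← exp_add]; ring_nf
    _ ≤ 2 / α * exp (-(α / 2) * t) := by gcongr

lemma integrable_exp_neg_mul_norm {E : Type*} [NormedAddCommGroup E] [NormedSpace ℝ E]
    [FiniteDimensional ℝ E] [MeasurableSpace E] [BorelSpace E] (μ : Measure E)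
    [μ.IsAddHaarMeasure] {c : ℝ} (hc : 0 < c) :
    Integrable (fun x => exp (-c * ‖x‖)) μ := by
  -- `x ^ n / n! ≤ exp x` with `n = dim E + 1` beats the integrable weight `(1 + ‖x‖) ^ (-n)`
  set n := Module.finrank ℝ E + 1
  have hdom : ∀ t : ℝ, 0 ≤ t →
      exp (-c * t) ≤ exp c * n.factorial / c ^ n * (1 + t) ^ (-(n : ℝ)) := fun t ht => by
    have h := pow_div_factorial_le_exp (x := c * (1 + t)) (by positivity) n
    rw [rpow_neg (by positivity), rpow_natCast, neg_mul, exp_neg]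
    rw [div_le_iff₀ (by positivity), mul_pow, mul_add c, mul_one, exp_add] at h
    rw [inv_le_iff_one_le_mul₀ (exp_pos _)]
    calc (1 : ℝ) = c ^ n * (1 + t) ^ n / (c ^ n * (1 + t) ^ n) := (div_self (by positivity)).symm
      _ ≤ exp c * exp (c * t) * n.factorial / (c ^ n * (1 + t) ^ n) := by gcongr
      _ = _ := by field_simp
  have hweight : Integrable (fun x : E => (1 + ‖x‖) ^ (-(n : ℝ))) μ :=
    integrable_one_add_norm (by simp [n])
  refine (hweight.const_mul (exp c * n.factorial / c ^ n)).mono' (by fun_prop)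
    (ae_of_all _ fun x => ?_)
  rw [norm_of_nonneg (exp_pos _).le]
  exact hdom _ (norm_nonneg x)

lemma exp_neg_add_le {α a b d : ℝ} (hα : 0 ≤ α) (hb : 0 ≤ b) (hd : d ≤ a + b) :
    exp (-(α / 2) * a) * exp (-(α / 2) * b) ≤ exp (-(α / 4) * d) * exp (-(α / 4) * a) := by
  rw [← exp_add, ← exp_add]
  exact exp_le_exp.2 (by nlinarith)

lemma norm_phase_mul_kernels_le {α C₁ C₂ : ℝ} (hα : 0 < α) (δω : ℝ)
    {x y x' : EuclideanSpace ℝ (Fin 3)} {u v : ℂ}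
    (hu : ‖u‖ ≤ C₁ * exp (-α * ‖x - y‖)) (hv : ‖v‖ ≤ C₂ * exp (-α * ‖y - x'‖)) :
    ‖(Complex.exp (Complex.I * δω * (fl x y x' : ℝ)) - 1) * u * v‖ ≤
      C₁ * C₂ * (4 / α ^ 2) * (|δω| * exp (-(α / 4) * ‖x - x'‖)) * exp (-(α / 4) * ‖x - y‖) := by
  have hC₁ : 0 ≤ C₁ := nonneg_of_mul_nonneg_left ((norm_nonneg u).trans hu) (exp_pos _)
  have hC₂ : 0 ≤ C₂ := nonneg_of_mul_nonneg_left ((norm_nonneg v).trans hv) (exp_pos _)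
  set a := ‖x - y‖
  set b := ‖y - x'‖
  calc ‖(Complex.exp (Complex.I * δω * (fl x y x' : ℝ)) - 1) * u * v‖
      ≤ |δω| * (a * b) * (C₁ * exp (-α * a)) * (C₂ * exp (-α * b)) := by
        rw [norm_mul, norm_mul]
        gcongr ?_ * ?_ * ?_
        exact norm_cexp_fl_sub_one_le δω x y x'
    _ = |δω| * C₁ * C₂ * (a * exp (-α * a)) * (b * exp (-α * b)) := by ring
    _ ≤ |δω| * C₁ * C₂ * (2 / α * exp (-(α / 2) * a)) * (2 / α * exp (-(α / 2) * b)) := by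
        gcongr _ * ?_ * ?_
        · exact mul_exp_neg_le hα a
        · exact mul_exp_neg_le hα b
    _ = C₁ * C₂ * (4 / α ^ 2) * |δω| * (exp (-(α / 2) * a) * exp (-(α / 2) * b)) := by ring
    _ ≤ C₁ * C₂ * (4 / α ^ 2) * |δω| * (exp (-(α / 4) * ‖x - x'‖) * exp (-(α / 4) * a)) := by
        gcongr _ * ?_
        exact exp_neg_add_le hα.le (norm_nonneg _) (norm_sub_le_norm_sub_add_norm_sub x y x')
    _ = _ := by ring

lemma norm_setIntegral_le_of_norm_le_mul_exp_neg {E F : Type*} [NormedAddCommGroup E]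
    [NormedSpace ℝ E] [FiniteDimensional ℝ E] [MeasurableSpace E] [BorelSpace E]
    {μ : Measure E} [μ.IsAddHaarMeasure] [NormedAddCommGroup F] [NormedSpace ℝ F]
    {f : E → F} {s : Set E} (hs : MeasurableSet s) {A c : ℝ} (hA : 0 ≤ A) (hc : 0 < c) (x : E)
    (hf : ∀ y ∈ s, ‖f y‖ ≤ A * exp (-c * ‖x - y‖)) :
    ‖∫ y in s, f y ∂μ‖ ≤ A * ∫ y, exp (-c * ‖y‖) ∂μ := by
  have hint : Integrable (fun y => A * exp (-c * ‖x - y‖)) μ :=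
    ((integrable_exp_neg_mul_norm μ hc).comp_sub_left x).const_mul A
  calc ‖∫ y in s, f y ∂μ‖ ≤ ∫ y in s, A * exp (-c * ‖x - y‖) ∂μ :=
        norm_integral_le_of_norm_le hint.integrableOn (ae_restrict_of_forall_mem hs hf)
    _ ≤ ∫ y, A * exp (-c * ‖x - y‖) ∂μ :=
        setIntegral_le_integral hint (ae_of_all _ fun y => by positivity)
    _ = A * ∫ y, exp (-c * ‖y‖) ∂μ := by
        rw [integral_const_mul, integral_sub_left_eq_self (fun y => exp (-c * ‖y‖)) μ x]

theorem r_kernel_bound (α C₁ C₂ : ℝ) (hα : 0 < α) (hC₁ : 0 < C₁) (hC₂ : 0 < C₂)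
    (z : ℂ) :
    ∃ C₃ : ℝ, 0 < C₃ ∧ ∀ L : ℝ, 1 < L → ∀ δω : ℝ,
      ∀ G g : EuclideanSpace ℝ (Fin 3) → EuclideanSpace ℝ (Fin 3) → ℂ,
        Measurable (Function.uncurry G) → Measurable (Function.uncurry g) →
        (∀ x ∈ cube L, ∀ y ∈ cube L, ‖G x y‖ ≤ C₁ * Real.exp (-α * ‖x - y‖)) →
        (∀ y ∈ cube L, ∀ x' ∈ cube L, ‖g y x'‖ ≤ C₂ * Real.exp (-α * ‖y - x'‖)) →
        ∀ x ∈ cube L, ∀ x' ∈ cube L,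
          ‖-z * ∫ y in cube L,
              (Complex.exp (Complex.I * (δω : ℂ) * (fl x y x' : ℝ)) - 1) *
                G x y * g y x'‖ ≤ C₃ * |δω| * Real.exp (-(α / 4) * ‖x - x'‖) := by
  set K := ∫ y : EuclideanSpace ℝ (Fin 3), exp (-(α / 4) * ‖y‖)
  have hK : 0 ≤ K := integral_nonneg fun _ => (exp_pos _).le
  refine ⟨‖z‖ * (C₁ * C₂ * (4 / α ^ 2)) * K + 1, by positivity, ?_⟩
  intro L _ δω G g _ _ hG hg x hx x' hx'
  set decay := |δω| * exp (-(α / 4) * ‖x - x'‖)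
  have hr := norm_setIntegral_le_of_norm_le_mul_exp_neg (μ := volume)
    (isOpen_cube L).measurableSet (A := C₁ * C₂ * (4 / α ^ 2) * decay) (by positivity)
    (by positivity : 0 < α / 4) x fun y hy =>
      norm_phase_mul_kernels_le hα δω (hG x hx y hy) (hg y hy x' hx')
  rw [norm_mul, norm_neg]
  calc ‖z‖ * ‖∫ y in cube L, (Complex.exp (Complex.I * δω * (fl x y x' : ℝ)) - 1) *
        G x y * g y x'‖
      ≤ ‖z‖ * (C₁ * C₂ * (4 / α ^ 2) * decay * K) := by gcongr
    _ ≤ (‖z‖ * (C₁ * C₂ * (4 / α ^ 2)) * K + 1) * decay := by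
        nlinarith [(by positivity : 0 ≤ decay)]
    _ = _ := by ring
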